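/- arXiv:1912.06438 — 2 statements merged into one kernel-verified Lean document; each statement's English description precedes it below -/
import Mathlib

section
/- Let G be a finite connected weighted graph satisfying CD(ρ, ∞) and let f be an eigenfunction of L with eigenvalue λ, and φ > 0 any function. Then λ ⟨φ, Γf⟩ ≥ ⟨((1/2)L + ρ)φ, Γf⟩, where ⟨·,·⟩ is the ℓ²(V,m) inner product. -/
open Real ENNReal

structure WGraph (V : Type*) where
  w : V → V → ℝ
  m : V → ℝ
  symm : ∀ x y, w x y = w y x
  nonneg : ∀ x y, 0 ≤ w x y
  loopless : ∀ x, w x x = 0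
  mpos : ∀ x, 0 < m x
  locFin : ∀ x, (Function.support (w x)).Finite

namespace WGraph

variable {V : Type*} (G : WGraph V)

/-- transition weights -/
noncomputable def q (x y : V) : ℝ := G.w x y / G.m x

/-- the graph Laplacian `Δ` -/
noncomputable def lap (f : V → ℝ) (x : V) : ℝ := ∑' y, G.q x y * (f y - f x)

/-- the weighted vertex degree -/
noncomputable def deg (x : V) : ℝ := ∑' y, G.q x y

/-- the bilinear carré du champ operator `Γ(f,g)` -/
noncomputable def gammaB (f g : V → ℝ) (x : V) : ℝ :=
  (1 / 2) * (G.lap (f * g) x - f x * G.lap g x - g x * G.lap f x)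

/-- the carré du champ operator `Γ f` -/
noncomputable def gamma (f : V → ℝ) : V → ℝ := G.gammaB f f

/-- the iterated carré du champ operator `Γ₂ f` -/
noncomputable def gamma2 (f : V → ℝ) (x : V) : ℝ :=
  (1 / 2) * G.lap (G.gamma f) x - G.gammaB f (G.lap f) x

/-- boundedness of a function -/
def Bdd (f : V → ℝ) : Prop := ∃ C, ∀ x, |f x| ≤ C

/-- the variable curvature dimension condition `CD(ρ,n)` -/
def CD (ρ : V → ℝ) (n : ℝ≥0∞) : Prop :=
  ∀ f, Bdd f → ∀ x, ρ x * G.gamma f x + (n⁻¹).toReal * (G.lap f x) ^ 2 ≤ G.gamma2 f x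

/-- the underlying simple graph (for the combinatorial metric) -/
def toSimpleGraph : SimpleGraph V where
  Adj x y := 0 < G.w x y
  symm := ⟨by intro x y (h : 0 < G.w x y); rwa [G.symm] at h⟩
  loopless := ⟨by intro x (h : 0 < G.w x x); rw [G.loopless] at h; exact lt_irrefl 0 h⟩

/-- `P` is the semigroup `e^{-t(L+W)}` generated by `-(L+W) = Δ - W`. -/
def IsSemigroup (W : V → ℝ) (P : ℝ → (V → ℝ) → V → ℝ) : Prop :=
  (∀ f, P 0 f = f) ∧
  (∀ s t, 0 ≤ s → 0 ≤ t → ∀ f, P (s + t) f = P s (P t f)) ∧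
  (∀ t f g, P t (f + g) = P t f + P t g) ∧
  (∀ t (c : ℝ) f, P t (c • f) = c • P t f) ∧
  (∀ f, Bdd f → ∀ t, 0 ≤ t → Bdd (P t f)) ∧
  (∀ f, Bdd f → ∀ x, ContinuousOn (fun s => P s f x) (Set.Ici 0)) ∧
  (∀ f, Bdd f → ∀ x t, 0 < t →
    HasDerivAt (fun s => P s f x) (G.lap (P t f) x - W x * P t f x) t) ∧
  (∀ f, Bdd f → (∀ x, 0 ≤ f x) → ∀ t, 0 ≤ t → ∀ x, 0 ≤ P t f x)

end WGraph


section Aux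
variable {V : Type*} [Fintype V] (G : WGraph V)

lemma lap_eq (u : V → ℝ) (x : V) : G.lap u x = ∑ y, G.q x y * (u y - u x) :=
  tsum_fintype _

lemma lap_const_mul (u : V → ℝ) (c : ℝ) (x : V) :
    G.lap (fun y => c * u y) x = c * G.lap u x := by
  rw [lap_eq, lap_eq, Finset.mul_sum]
  exact Finset.sum_congr rfl fun y _ => by ring

lemma gammaB_const_mul (f g : V → ℝ) (c : ℝ) (x : V) :
    G.gammaB f (fun y => c * g y) x = c * G.gammaB f g x := by
  unfold WGraph.gammaB
  have h1 : (f * fun y => c * g y) = fun y => c * (f * g) y := by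
    funext y; simp [Pi.mul_apply]; ring
  rw [h1, lap_const_mul, lap_const_mul]
  show (1/2) * (c * G.lap (f*g) x - f x * (c * G.lap g x) - c * g x * G.lap f x) = _
  ring

lemma selfadj (u v : V → ℝ) :
    ∑ x, G.m x * u x * G.lap v x = ∑ x, G.m x * v x * G.lap u x := by
  have h : ∀ (a b : V → ℝ), ∑ x, G.m x * a x * G.lap b x
      = (∑ x, ∑ y, G.w x y * a x * b y) - ∑ x, ∑ y, G.w x y * a x * b x := by
    intro a b
    rw [← Finset.sum_sub_distrib]
    refine Finset.sum_congr rfl fun x _ => ?_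
    rw [← Finset.sum_sub_distrib, lap_eq, Finset.mul_sum]
    refine Finset.sum_congr rfl fun y _ => ?_
    have hm := (G.mpos x).ne'
    rw [WGraph.q]
    field_simp
  rw [h, h]
  congr 1
  · rw [Finset.sum_comm]
    exact Finset.sum_congr rfl fun y _ => Finset.sum_congr rfl fun x _ => by
      rw [G.symm]; ring
  · exact Finset.sum_congr rfl fun x _ => Finset.sum_congr rfl fun y _ => by ring

end Aux

open WGraph in
theorem eigenfunction_gamma_inequality {V : Type*} [Fintype V] (G : WGraph V)
    (hconn : G.toSimpleGraph.Preconnected) (ρ : V → ℝ) (hCD : G.CD ρ ⊤)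
    (f : V → ℝ) (lam : ℝ) (hf : ∀ x, -(G.lap f x) = lam * f x)
    (φ : V → ℝ) (hφ : ∀ x, 0 < φ x) :
    ∑ x, G.m x * ((1 / 2) * (-(G.lap φ x)) + ρ x * φ x) * G.gamma f x
      ≤ lam * ∑ x, G.m x * φ x * G.gamma f x := by
  -- every function on a finite vertex set is bounded
  have hBdd : ∀ g : V → ℝ, WGraph.Bdd g := fun g =>
    ⟨∑ y, |g y|, fun x =>
      Finset.single_le_sum (f := fun y => |g y|) (fun i _ => abs_nonneg _)
        (Finset.mem_univ x)⟩
  -- the eigenfunction equation as an equality of functions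
  have hlapf : G.lap f = fun y => -lam * f y := by
    funext y
    have := hf y
    linarith
  -- Γ₂ f = (1/2) Δ Γ f + λ Γ f for the eigenfunction
  have hg2 : ∀ x, G.gamma2 f x
      = (1 / 2) * G.lap (G.gamma f) x + lam * G.gamma f x := by
    intro x
    have h1 : G.gammaB f (G.lap f) x = -lam * G.gamma f x := by
      rw [hlapf, gammaB_const_mul]
      rfl
    rw [WGraph.gamma2, h1]
    ring
  -- CD(ρ,∞) gives the pointwise inequality ρ Γf ≤ Γ₂ f
  have hpt : ∀ x, ρ x * G.gamma f x
      ≤ (1 / 2) * G.lap (G.gamma f) x + lam * G.gamma f x := by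
    intro x
    have h := hCD f (hBdd f) x
    simp only [ENNReal.inv_top, ENNReal.toReal_zero, zero_mul, add_zero] at h
    rw [hg2 x] at h
    exact h
  -- multiply by m φ ≥ 0 and sum
  have hsum : ∑ x, G.m x * (φ x * (ρ x * G.gamma f x))
      ≤ ∑ x, G.m x * (φ x * ((1 / 2) * G.lap (G.gamma f) x + lam * G.gamma f x)) := by
    refine Finset.sum_le_sum fun x _ => ?_
    have hmφ : 0 ≤ G.m x * φ x := le_of_lt (mul_pos (G.mpos x) (hφ x))
    calc G.m x * (φ x * (ρ x * G.gamma f x))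
        = G.m x * φ x * (ρ x * G.gamma f x) := by ring
      _ ≤ G.m x * φ x * ((1 / 2) * G.lap (G.gamma f) x + lam * G.gamma f x) :=
          mul_le_mul_of_nonneg_left (hpt x) hmφ
      _ = G.m x * (φ x * ((1 / 2) * G.lap (G.gamma f) x + lam * G.gamma f x)) := by
          ring
  -- self-adjointness of the Laplacian
  have hsa : ∑ x, G.m x * G.gamma f x * G.lap φ x
      = ∑ x, G.m x * φ x * G.lap (G.gamma f) x := selfadj G (G.gamma f) φ
  -- rewrite both sides as combinations of sums
  have e1 : ∑ x, G.m x * ((1 / 2) * (-(G.lap φ x)) + ρ x * φ x) * G.gamma f x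
      = ∑ x, G.m x * (φ x * (ρ x * G.gamma f x))
        - (1 / 2) * ∑ x, G.m x * G.gamma f x * G.lap φ x := by
    rw [Finset.mul_sum, ← Finset.sum_sub_distrib]
    exact Finset.sum_congr rfl fun x _ => by ring
  have e2 : ∑ x, G.m x * (φ x * ((1 / 2) * G.lap (G.gamma f) x + lam * G.gamma f x))
      = (1 / 2) * ∑ x, G.m x * φ x * G.lap (G.gamma f) x
        + lam * ∑ x, G.m x * φ x * G.gamma f x := by
    rw [Finset.mul_sum, Finset.mul_sum, ← Finset.sum_add_distrib]
    exact Finset.sum_congr rfl fun x _ => by ring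
  linarith [hsum, hsa, e1, e2]
end

section
/- (Semigroup norm bound from Kato condition, abstract form) Let L ≥ 0 generate a Dirichlet form on ℓ²(V, m) with Markov semigroup P_t, and let W : V → [0,∞) be bounded with ∫₀ᵀ ‖P_t W‖_∞ dt ≤ α < 1 for some T > 0. Then ‖P_t^{-W}‖_{∞,∞} ≤ (1-α)^{-1} ≤ e^{KT/2} for t ∈ (0, T] whenever α ≤ (1/2)(1 - e^{-KT/4}); consequently, if W = (ρ - K)₋ and this bound holds, then ‖P_t^ρ‖_{∞,∞} ≤ e^{-Kt} e^{KT/2} for all t ∈ (0, T], and by the semigroup property ‖P_t^ρ‖_{∞,∞} ≤ e^{K(T-t)/2} for all t > 0. -/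
open Real ENNReal

namespace WGraph

variable {V : Type*} (G : WGraph V)

lemma q_nonneg (x y : V) : 0 ≤ G.q x y := div_nonneg (G.nonneg x y) (G.mpos x).le

lemma q_eq_zero {x y : V} (h : y ∉ (G.locFin x).toFinset) : G.q x y = 0 := by
  have : G.w x y = 0 := by
    by_contra hw
    exact h ((G.locFin x).mem_toFinset.mpr hw)
  simp [q, this]

lemma lap_eq_sum (f : V → ℝ) (x : V) :
    G.lap f x = ∑ y ∈ (G.locFin x).toFinset, G.q x y * (f y - f x) := by
  refine tsum_eq_sum ?_
  intro y hy
  rw [G.q_eq_zero hy, zero_mul]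

lemma deg_eq_sum (x : V) :
    G.deg x = ∑ y ∈ (G.locFin x).toFinset, G.q x y := by
  refine tsum_eq_sum ?_
  intro y hy
  exact G.q_eq_zero hy

lemma deg_nonneg (x : V) : 0 ≤ G.deg x := by
  rw [deg_eq_sum]
  exact Finset.sum_nonneg fun y _ => G.q_nonneg x y

lemma lap_eq_sum' (f : V → ℝ) (x : V) :
    G.lap f x = (∑ y ∈ (G.locFin x).toFinset, G.q x y * f y) - G.deg x * f x := by
  rw [lap_eq_sum, deg_eq_sum, Finset.sum_mul]
  rw [← Finset.sum_sub_distrib]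
  congr 1; ext y; ring

lemma lap_neg (f : V → ℝ) (x : V) :
    G.lap (fun y => -(f y)) x = -(G.lap f x) := by
  rw [lap_eq_sum, lap_eq_sum, ← Finset.sum_neg_distrib]
  congr 1; ext y; ring

lemma lap_sub (f g : V → ℝ) (x : V) :
    G.lap (fun y => f y - g y) x = G.lap f x - G.lap g x := by
  rw [lap_eq_sum, lap_eq_sum, lap_eq_sum, ← Finset.sum_sub_distrib]
  congr 1; ext y; ring

lemma lap_const_add (c : ℝ) (f : V → ℝ) (x : V) :
    G.lap (fun y => c + f y) x = G.lap f x := by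
  rw [lap_eq_sum, lap_eq_sum]
  congr 1; ext y; ring

lemma lap_const_mul (c : ℝ) (f : V → ℝ) (x : V) :
    G.lap (fun y => c * f y) x = c * G.lap f x := by
  rw [lap_eq_sum, lap_eq_sum, Finset.mul_sum]
  congr 1; ext y; ring

/-- continuity in a parameter -/
lemma lap_continuousOn (f : ℝ → V → ℝ) (x : V) (s : Set ℝ)
    (hf : ∀ y, ContinuousOn (fun t => f t y) s) :
    ContinuousOn (fun t => G.lap (f t) x) s := by
  have : (fun t => G.lap (f t) x)
      = fun t => ∑ y ∈ (G.locFin x).toFinset, G.q x y * (f t y - f t x) := by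
    funext t; exact G.lap_eq_sum (f t) x
  rw [this]
  exact continuousOn_finset_sum _ fun y _ =>
    (continuousOn_const.mul ((hf y).sub (hf x)))

/-- upper bound for the "off-diagonal" part of the Laplacian -/
lemma lap_sum_le (f : V → ℝ) (x : V) (b : ℝ) (hb : ∀ y, f y ≤ b) :
    ∑ y ∈ (G.locFin x).toFinset, G.q x y * f y ≤ G.deg x * b := by
  rw [deg_eq_sum, Finset.sum_mul]
  exact Finset.sum_le_sum fun y _ =>
    mul_le_mul_of_nonneg_left (hb y) (G.q_nonneg x y)

end WGraph

namespace WGraph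

variable {V : Type*}

lemma bdd_const (c : ℝ) : Bdd (fun _ : V => c) := ⟨|c|, fun _ => le_rfl⟩

lemma bdd_of_abs_le {f : V → ℝ} {M : ℝ} (h : ∀ x, |f x| ≤ M) : Bdd f := ⟨M, h⟩

lemma Bdd.sub {f g : V → ℝ} (hf : Bdd f) (hg : Bdd g) : Bdd (fun x => f x - g x) := by
  obtain ⟨C, hC⟩ := hf; obtain ⟨C', hC'⟩ := hg
  refine ⟨C + C', fun x => ?_⟩
  calc |f x - g x| ≤ |f x| + |g x| := abs_sub (f x) (g x)
    _ ≤ C + C' := add_le_add (hC x) (hC' x)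

variable (G : WGraph V)

section SG

variable {W : V → ℝ} {Q : ℝ → (V → ℝ) → V → ℝ}

lemma sg_neg (hQ : G.IsSemigroup W Q) (t : ℝ) (f : V → ℝ) (x : V) :
    Q t (fun y => -(f y)) x = -(Q t f x) := by
  have h1 : (fun y => -(f y)) = (-1 : ℝ) • f := by funext y; simp
  rw [h1, hQ.2.2.2.1]
  simp

lemma sg_mono (hQ : G.IsSemigroup W Q) {f g : V → ℝ} (hf : Bdd f) (hg : Bdd g)
    (hfg : ∀ x, f x ≤ g x) {t : ℝ} (ht : 0 ≤ t) (x : V) : Q t f x ≤ Q t g x := by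
  have hsub : Bdd (fun x => g x - f x) := hg.sub hf
  have hpos := hQ.2.2.2.2.2.2.2 (fun x => g x - f x) hsub
    (fun x => sub_nonneg.2 (hfg x)) t ht x
  have hg' : g = f + fun x => g x - f x := by funext y; simp
  have := hQ.2.2.1 t f (fun x => g x - f x)
  calc Q t f x ≤ Q t f x + Q t (fun x => g x - f x) x := le_add_of_nonneg_right hpos
    _ = Q t g x := by rw [hg']; rw [this]; simp

lemma sg_one_nonneg (hQ : G.IsSemigroup W Q) {t : ℝ} (ht : 0 ≤ t) (x : V) :
    0 ≤ Q t (fun _ => (1:ℝ)) x :=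
  hQ.2.2.2.2.2.2.2 _ (bdd_const 1) (fun _ => zero_le_one) t ht x

lemma sg_one_growth (hQ : G.IsSemigroup W Q) (D CW : ℝ)
    (hD : ∀ x, G.deg x ≤ D) (hCW : ∀ x, |W x| ≤ CW) (hDCW : 0 ≤ D + CW)
    {s t : ℝ} (hs : 0 ≤ s) (hst : s ≤ t) (x : V) :
    Q s (fun _ => (1:ℝ)) x ≤ Real.exp ((D + CW) * (t - s)) * Q t (fun _ => (1:ℝ)) x := by
  set lam := D + CW with hlam
  have ht0 : (0:ℝ) ≤ t := hs.trans hst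
  set F : ℝ → ℝ := fun u => Real.exp (lam * u) * Q u (fun _ => (1:ℝ)) x with hF
  have hderivF : ∀ u ∈ Set.Ioo (0:ℝ) t, HasDerivAt F
      (Real.exp (lam * u) * lam * Q u (fun _ => (1:ℝ)) x +
        Real.exp (lam * u) * (G.lap (Q u (fun _ => (1:ℝ))) x - W x * Q u (fun _ => (1:ℝ)) x)) u := by
    intro u hu
    have h1 : HasDerivAt (fun u : ℝ => lam * u) lam u := by
      simpa using (hasDerivAt_id u).const_mul lam
    have h2 := hQ.2.2.2.2.2.2.1 (fun _ => (1:ℝ)) (bdd_const 1) x u hu.1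
    exact h1.exp.mul h2
  have hQcont := hQ.2.2.2.2.2.1 (fun _ => (1:ℝ)) (bdd_const 1) x
  have hFc : ContinuousOn F (Set.Icc 0 t) := by
    apply ContinuousOn.mul
    · exact ((Real.continuous_exp.comp (continuous_const.mul continuous_id)).continuousOn)
    · exact hQcont.mono (fun u hu => hu.1)
  have hmono : MonotoneOn F (Set.Icc 0 t) := by
    apply monotoneOn_of_deriv_nonneg (convex_Icc 0 t) hFc
    · intro u hu
      rw [interior_Icc] at hu
      exact (hderivF u hu).differentiableAt.differentiableWithinAt
    · intro u hu
      rw [interior_Icc] at hu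
      rw [(hderivF u hu).deriv]
      have hQpos : 0 ≤ Q u (fun _ => (1:ℝ)) x := G.sg_one_nonneg hQ hu.1.le x
      have hlappos : 0 ≤ G.lap (Q u (fun _ => (1:ℝ))) x + G.deg x * Q u (fun _ => (1:ℝ)) x := by
        rw [G.lap_eq_sum']
        have : 0 ≤ ∑ y ∈ (G.locFin x).toFinset, G.q x y * Q u (fun _ => (1:ℝ)) y :=
          Finset.sum_nonneg fun y _ =>
            mul_nonneg (G.q_nonneg x y) (G.sg_one_nonneg hQ hu.1.le y)
        linarith
      have hW : -(W x * Q u (fun _ => (1:ℝ)) x) ≥ -(CW * Q u (fun _ => (1:ℝ)) x) := by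
        have := (abs_le.1 (hCW x)).2
        nlinarith
      have hexp : 0 < Real.exp (lam * u) := Real.exp_pos _
      have h4 : 0 ≤ (D - G.deg x) * Q u (fun _ => (1:ℝ)) x :=
        mul_nonneg (sub_nonneg.2 (hD x)) hQpos
      have key : 0 ≤ lam * Q u (fun _ => (1:ℝ)) x +
          (G.lap (Q u (fun _ => (1:ℝ))) x - W x * Q u (fun _ => (1:ℝ)) x) := by
        rw [hlam]
        nlinarith [h4, hlappos, hW, hQpos]
      have h6 : Real.exp (lam * u) * lam * Q u (fun _ => (1:ℝ)) x +
          Real.exp (lam * u) * (G.lap (Q u (fun _ => (1:ℝ))) x - W x * Q u (fun _ => (1:ℝ)) x)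
          = Real.exp (lam * u) * (lam * Q u (fun _ => (1:ℝ)) x +
            (G.lap (Q u (fun _ => (1:ℝ))) x - W x * Q u (fun _ => (1:ℝ)) x)) := by ring
      rw [h6]
      exact mul_nonneg hexp.le key
  have hs' : s ∈ Set.Icc (0:ℝ) t := ⟨hs, hst⟩
  have ht' : t ∈ Set.Icc (0:ℝ) t := ⟨ht0, le_rfl⟩
  have key := hmono hs' ht' hst
  have h3 : Q s (fun _ => (1:ℝ)) x = Real.exp (-(lam * s)) * F s := by
    rw [hF]; rw [← mul_assoc, ← Real.exp_add]; simp
  rw [h3]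
  calc Real.exp (-(lam * s)) * F s ≤ Real.exp (-(lam * s)) * F t :=
        mul_le_mul_of_nonneg_left key (Real.exp_pos _).le
    _ = Real.exp (lam * (t - s)) * Q t (fun _ => (1:ℝ)) x := by
        rw [hF, ← mul_assoc, ← Real.exp_add]; ring_nf

lemma sg_unifBound [Nonempty V] (hQ : G.IsSemigroup W Q) (D CW T' : ℝ)
    (hD : ∀ x, G.deg x ≤ D) (hCW : ∀ x, |W x| ≤ CW) (hT' : 0 ≤ T') :
    ∃ B : ℝ, 1 ≤ B ∧ ∀ t ∈ Set.Icc (0:ℝ) T', ∀ (f : V → ℝ) (M : ℝ), 0 ≤ M →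
      (∀ y, |f y| ≤ M) → ∀ x, |Q t f x| ≤ M * B := by
  have hD0 : 0 ≤ D := (G.deg_nonneg (Classical.arbitrary V)).trans (hD _)
  have hCW0 : 0 ≤ CW := (abs_nonneg _).trans (hCW (Classical.arbitrary V))
  have hDCW : 0 ≤ D + CW := by linarith
  obtain ⟨C, hC⟩ := hQ.2.2.2.2.1 (fun _ => (1:ℝ)) (bdd_const 1) T' hT'
  set B := Real.exp ((D + CW) * T') * C with hB
  have hone : ∀ t ∈ Set.Icc (0:ℝ) T', ∀ x, Q t (fun _ => (1:ℝ)) x ≤ B := by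
    intro t ht x
    have := G.sg_one_growth hQ D CW hD hCW hDCW ht.1 ht.2 x
    have hCx := (abs_le.1 (hC x)).2
    have h2 : Real.exp ((D + CW) * (T' - t)) ≤ Real.exp ((D + CW) * T') := by
      apply Real.exp_le_exp.2
      nlinarith [ht.1]
    have hQTpos : 0 ≤ Q T' (fun _ => (1:ℝ)) x := G.sg_one_nonneg hQ hT' x
    calc Q t (fun _ => (1:ℝ)) x ≤ Real.exp ((D + CW) * (T' - t)) * Q T' (fun _ => (1:ℝ)) x := this
      _ ≤ Real.exp ((D + CW) * T') * C := by
          apply mul_le_mul h2 hCx hQTpos (Real.exp_pos _).le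
  have hB1 : 1 ≤ B := by
    have h0 : (0:ℝ) ∈ Set.Icc (0:ℝ) T' := ⟨le_rfl, hT'⟩
    have := hone 0 h0 (Classical.arbitrary V)
    rw [hQ.1] at this
    exact this
  refine ⟨B, hB1, fun t ht f M hM hf x => ?_⟩
  have hfB : Bdd f := bdd_of_abs_le hf
  have hub : Q t f x ≤ M * B := by
    have h1 : Q t f x ≤ Q t (fun _ => M) x :=
      G.sg_mono hQ hfB (bdd_const M) (fun y => (abs_le.1 (hf y)).2) ht.1 x
    have h2 : (fun _ : V => M) = M • (fun _ : V => (1:ℝ)) := by funext y; simp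
    have h3 : Q t (fun _ => M) x = M * Q t (fun _ => (1:ℝ)) x := by
      rw [h2, hQ.2.2.2.1]; simp
    rw [h3] at h1
    calc Q t f x ≤ M * Q t (fun _ => (1:ℝ)) x := h1
      _ ≤ M * B := mul_le_mul_of_nonneg_left (hone t ht x) hM
  have hlb : -(M * B) ≤ Q t f x := by
    have h1 : Q t (fun y => -(f y)) x ≤ Q t (fun _ => M) x :=
      G.sg_mono hQ ⟨M, fun y => by simpa using hf y⟩ (bdd_const M)
        (fun y => (abs_le.1 (by simpa using hf y)).2) ht.1 x
    rw [G.sg_neg hQ] at h1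
    have h2 : (fun _ : V => M) = M • (fun _ : V => (1:ℝ)) := by funext y; simp
    have h3 : Q t (fun _ => M) x = M * Q t (fun _ => (1:ℝ)) x := by
      rw [h2, hQ.2.2.2.1]; simp
    rw [h3] at h1
    have : -(Q t f x) ≤ M * B :=
      h1.trans (mul_le_mul_of_nonneg_left (hone t ht x) hM)
    linarith
  exact abs_le.2 ⟨hlb, hub⟩

end SG

end WGraph

namespace WGraph

open MeasureTheory intervalIntegral

variable {V : Type*} [Nonempty V] (G : WGraph V)

/-- The parabolic maximum principle on graphs with bounded degree. -/
lemma maxPrinciple (D C₀ T' M : ℝ) (hDd : ∀ x, G.deg x ≤ D) (hT' : 0 ≤ T')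
    (c : V → ℝ) (hc : ∀ x, |c x| ≤ C₀)
    (h r : ℝ → V → ℝ)
    (hcont : ∀ x, ContinuousOn (fun s => h s x) (Set.Ici 0))
    (hrcont : ∀ x, ContinuousOn (fun s => r s x) (Set.Ici 0))
    (hderiv : ∀ x t, 0 < t →
      HasDerivAt (fun s => h s x) (G.lap (h t) x - c x * h t x + r t x) t)
    (hrpos : ∀ t ∈ Set.Icc (0:ℝ) T', ∀ x, 0 ≤ r t x)
    (hM : ∀ t ∈ Set.Icc (0:ℝ) T', ∀ x, |h t x| ≤ M)
    (h0 : ∀ x, 0 ≤ h 0 x) :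
    ∀ t ∈ Set.Icc (0:ℝ) T', ∀ x, 0 ≤ h t x := by
  obtain ⟨x₀⟩ := (inferInstance : Nonempty V)
  have hD0 : 0 ≤ D := (G.deg_nonneg x₀).trans (hDd x₀)
  have hC₀ : 0 ≤ C₀ := (abs_nonneg _).trans (hc x₀)
  have hM0 : 0 ≤ M := (abs_nonneg _).trans (hM 0 ⟨le_rfl, hT'⟩ x₀)
  set E := Real.exp ((D + C₀) * T') with hE
  have hE1 : 1 ≤ E := by
    rw [hE]; rw [← Real.exp_zero]; apply Real.exp_le_exp.2; positivity
  set Λ := E * (E * D) with hΛ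
  have hΛ0 : 0 ≤ Λ := by positivity
  -- the (sup of the) negative part
  set φ : ℝ → ℝ := fun t => ⨆ x, max (-(h t x)) 0 with hφ
  have hφbdd : ∀ t ∈ Set.Icc (0:ℝ) T', ∀ b : ℝ, M ≤ b →
      ∀ x, max (-(h t x)) 0 ≤ b := by
    intro t ht b hb x
    have := (abs_le.1 (hM t ht x)).1
    have : -(h t x) ≤ M := by linarith
    exact max_le (this.trans hb) (hM0.trans hb)
  have hφBdd : ∀ t ∈ Set.Icc (0:ℝ) T', BddAbove (Set.range fun x => max (-(h t x)) 0) :=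
    fun t ht => ⟨M, by rintro b ⟨x, rfl⟩; exact hφbdd t ht M le_rfl x⟩
  have hφle : ∀ t ∈ Set.Icc (0:ℝ) T', φ t ≤ M :=
    fun t ht => ciSup_le fun x => hφbdd t ht M le_rfl x
  have hφ0 : ∀ t ∈ Set.Icc (0:ℝ) T', 0 ≤ φ t :=
    fun t ht => le_trans (le_max_right _ _) (le_ciSup (hφBdd t ht) x₀)
  have hvφ : ∀ t ∈ Set.Icc (0:ℝ) T', ∀ x, -(h t x) ≤ φ t :=
    fun t ht x => le_trans (le_max_left _ _) (le_ciSup (hφBdd t ht) x)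
  -- the accumulated sup
  set Ψ : ℝ → ℝ≥0∞ := fun t => ∫⁻ s in Set.Ioc (0:ℝ) t, ENNReal.ofReal (φ s) with hΨ
  have hΨle : ∀ t ∈ Set.Icc (0:ℝ) T', Ψ t ≤ ENNReal.ofReal (M * t) := by
    intro t ht
    have h1 : Ψ t ≤ ∫⁻ _ in Set.Ioc (0:ℝ) t, ENNReal.ofReal M := by
      apply setLIntegral_mono measurable_const
      intro s hs
      exact ENNReal.ofReal_le_ofReal (hφle s ⟨hs.1.le, hs.2.trans ht.2⟩)
    rw [setLIntegral_const, Real.volume_Ioc] at h1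
    calc Ψ t ≤ ENNReal.ofReal M * ENNReal.ofReal (t - 0) := h1
      _ = ENNReal.ofReal (M * t) := by rw [← ENNReal.ofReal_mul hM0]; ring_nf
  have hΨtop : ∀ t ∈ Set.Icc (0:ℝ) T', Ψ t ≠ ⊤ :=
    fun t ht => ((hΨle t ht).trans_lt ENNReal.ofReal_lt_top).ne
  -- the key recursive estimate
  have key : ∀ t ∈ Set.Icc (0:ℝ) T', φ t ≤ Λ * (Ψ t).toReal := by
    intro t ht
    rcases eq_or_lt_of_le ht.1 with h0t | h0t
    · subst h0t
      have hΨ0 : Ψ 0 = 0 := by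
        rw [hΨ]; simp
      rw [hΨ0]
      simp only [ENNReal.toReal_zero, mul_zero]
      apply ciSup_le
      intro x
      exact max_le (by linarith [h0 x]) le_rfl
    · have hRHS0 : 0 ≤ Λ * (Ψ t).toReal := mul_nonneg hΛ0 ENNReal.toReal_nonneg
      apply ciSup_le
      intro x
      refine max_le ?_ hRHS0
      -- the integrating-factor function
      set θ := G.deg x + c x with hθ
      set u : ℝ → ℝ := fun s => Real.exp (θ * s) * (-(h s x)) with hu
      set δ : ℝ → ℝ := fun s => Real.exp (θ * s) * θ * (-(h s x)) +
        Real.exp (θ * s) * (-(G.lap (h s) x - c x * h s x + r s x)) with hδ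
      have hexpD : ∀ s : ℝ, HasDerivAt (fun s : ℝ => Real.exp (θ * s))
          (Real.exp (θ * s) * θ) s := by
        intro s
        have h1 : HasDerivAt (fun s : ℝ => θ * s) θ s := by
          simpa using (hasDerivAt_id s).const_mul θ
        exact h1.exp
      have huD : ∀ s ∈ Set.Ioo (0:ℝ) t, HasDerivAt u (δ s) s := by
        intro s hs
        exact (hexpD s).mul (hderiv x s hs.1).neg
      have hucont : ContinuousOn u (Set.Icc 0 t) := by
        apply ContinuousOn.mul
        · exact (Real.continuous_exp.comp (continuous_const.mul continuous_id)).continuousOn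
        · exact ((hcont x).mono (fun s hs => hs.1)).neg
      have hδcont : ContinuousOn δ (Set.Icc 0 t) := by
        have hIcc : Set.Icc (0:ℝ) t ⊆ Set.Ici 0 := fun s hs => hs.1
        have hexpc : ContinuousOn (fun s : ℝ => Real.exp (θ * s)) (Set.Icc 0 t) :=
          (Real.continuous_exp.comp (continuous_const.mul continuous_id)).continuousOn
        have hlapc : ContinuousOn (fun s => G.lap (h s) x) (Set.Icc 0 t) :=
          G.lap_continuousOn h x _ (fun y => (hcont y).mono hIcc)
        exact ((hexpc.mul continuousOn_const).mul ((hcont x).mono hIcc).neg).add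
          (hexpc.mul ((hlapc.sub (continuousOn_const.mul ((hcont x).mono hIcc))).add
            ((hrcont x).mono hIcc)).neg)
      have hδint : IntervalIntegrable δ volume 0 t := by
        apply ContinuousOn.intervalIntegrable
        rwa [Set.uIcc_of_le ht.1]
      have hFTC : ∫ s in (0:ℝ)..t, δ s = u t - u 0 := by
        apply integral_eq_sub_of_hasDeriv_right_of_le ht.1 hucont
          (fun s hs => (huD s hs).hasDerivWithinAt) hδint
      -- pointwise bound on δ
      have hδle : ∀ s ∈ Set.Ioc (0:ℝ) t, δ s ≤ E * (D * φ s) := by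
        intro s hs
        have hsIcc : s ∈ Set.Icc (0:ℝ) T' := ⟨hs.1.le, hs.2.trans ht.2⟩
        have hA : θ * (-(h s x)) + (-(G.lap (h s) x - c x * h s x + r s x)) ≤ D * φ s := by
          have hlap := G.lap_eq_sum' (h s) x
          have hsum : ∑ y ∈ (G.locFin x).toFinset, G.q x y * (-(h s y)) ≤
              G.deg x * φ s :=
            G.lap_sum_le (fun y => -(h s y)) x (φ s) (fun y => hvφ s hsIcc y)
          have hsum' : ∑ y ∈ (G.locFin x).toFinset, G.q x y * (-(h s y)) =
              -(∑ y ∈ (G.locFin x).toFinset, G.q x y * h s y) := by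
            rw [← Finset.sum_neg_distrib]; congr 1; ext y; ring
          have hr0 := hrpos s hsIcc x
          have hdegφ : G.deg x * φ s ≤ D * φ s :=
            mul_le_mul_of_nonneg_right (hDd x) (hφ0 s hsIcc)
          rw [hθ]
          rw [hlap] at *
          nlinarith [hsum, hsum', hr0, hdegφ]
        have hexpbd : Real.exp (θ * s) ≤ E := by
          rw [hE]
          apply Real.exp_le_exp.2
          have h1 : θ ≤ D + C₀ := by
            rw [hθ]; have := (abs_le.1 (hc x)).2; linarith [hDd x]
          nlinarith [hs.1.le, hsIcc.2, hs.1]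
        have hDφ : 0 ≤ D * φ s := mul_nonneg hD0 (hφ0 s hsIcc)
        have hδeq : δ s = Real.exp (θ * s) *
            (θ * (-(h s x)) + (-(G.lap (h s) x - c x * h s x + r s x))) := by
          rw [hδ]; ring
        rw [hδeq]
        rcases le_or_gt (θ * (-(h s x)) + (-(G.lap (h s) x - c x * h s x + r s x))) 0 with hA0 | hA0
        · have h1 : Real.exp (θ * s) *
              (θ * (-(h s x)) + (-(G.lap (h s) x - c x * h s x + r s x))) ≤ 0 :=
            mul_nonpos_of_nonneg_of_nonpos (Real.exp_pos _).le hA0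
          exact h1.trans (mul_nonneg (by linarith) hDφ)
        · exact mul_le_mul hexpbd hA hA0.le (by linarith)
      -- bound the integral of δ
      set g : ℝ → ℝ := fun s => max (δ s) 0 with hg
      have hgcont : ContinuousOn g (Set.Icc 0 t) := (continuous_id.max continuous_const).comp_continuousOn hδcont
      have hgint : IntervalIntegrable g volume 0 t := by
        apply ContinuousOn.intervalIntegrable
        rwa [Set.uIcc_of_le ht.1]
      have hint1 : ∫ s in (0:ℝ)..t, δ s ≤ ∫ s in (0:ℝ)..t, g s := by
        apply integral_mono_on ht.1 hδint hgint
        intro s _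
        exact le_max_left _ _
      have hint2 : ∫ s in (0:ℝ)..t, g s =
          ((∫⁻ s in Set.Ioc (0:ℝ) t, ENNReal.ofReal (g s))).toReal := by
        rw [integral_of_le ht.1]
        rw [integral_eq_lintegral_of_nonneg_ae]
        · exact Filter.Eventually.of_forall fun s => le_max_right _ _
        · exact (hgcont.mono Set.Ioc_subset_Icc_self).aestronglyMeasurable measurableSet_Ioc
      have hint3 : (∫⁻ s in Set.Ioc (0:ℝ) t, ENNReal.ofReal (g s)) ≤
          ENNReal.ofReal (E * D) * Ψ t := by
        have hmono : (∫⁻ s in Set.Ioc (0:ℝ) t, ENNReal.ofReal (g s)) ≤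
            ∫⁻ s in Set.Ioc (0:ℝ) t, ENNReal.ofReal (E * D) * ENNReal.ofReal (φ s) := by
          rw [← lintegral_indicator measurableSet_Ioc, ← lintegral_indicator measurableSet_Ioc]
          apply lintegral_mono
          intro s
          rcases Classical.em (s ∈ Set.Ioc (0:ℝ) t) with hsm | hsm
          · rw [Set.indicator_of_mem hsm, Set.indicator_of_mem hsm]
            have h1 : g s ≤ E * D * φ s := by
              have := hδle s hsm
              have hDφ : 0 ≤ E * (D * φ s) :=
                mul_nonneg (by linarith) (mul_nonneg hD0 (hφ0 s ⟨hsm.1.le, hsm.2.trans ht.2⟩))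
              rw [hg]
              apply max_le (by linarith) (by linarith)
            calc ENNReal.ofReal (g s) ≤ ENNReal.ofReal (E * D * φ s) :=
                  ENNReal.ofReal_le_ofReal h1
              _ = ENNReal.ofReal (E * D) * ENNReal.ofReal (φ s) :=
                  ENNReal.ofReal_mul (by positivity)
          · rw [Set.indicator_of_notMem hsm, Set.indicator_of_notMem hsm]
        calc (∫⁻ s in Set.Ioc (0:ℝ) t, ENNReal.ofReal (g s)) ≤
            ∫⁻ s in Set.Ioc (0:ℝ) t, ENNReal.ofReal (E * D) * ENNReal.ofReal (φ s) := hmono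
          _ = ENNReal.ofReal (E * D) * Ψ t :=
              lintegral_const_mul' _ _ ENNReal.ofReal_ne_top
      have hEDΨtop : ENNReal.ofReal (E * D) * Ψ t ≠ ⊤ :=
        ENNReal.mul_ne_top ENNReal.ofReal_ne_top (hΨtop t ht)
      have hint4 : ∫ s in (0:ℝ)..t, δ s ≤ E * D * (Ψ t).toReal := by
        have h2 := ENNReal.toReal_mono hEDΨtop hint3
        rw [ENNReal.toReal_mul, ENNReal.toReal_ofReal (by positivity : (0:ℝ) ≤ E * D)] at h2
        calc ∫ s in (0:ℝ)..t, δ s ≤ ∫ s in (0:ℝ)..t, g s := hint1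
          _ = _ := hint2
          _ ≤ E * D * (Ψ t).toReal := h2
      -- conclude the pointwise bound
      have hut : u t ≤ E * D * (Ψ t).toReal := by
        have hu0 : u 0 ≤ 0 := by
          rw [hu]; simp only [mul_zero, Real.exp_zero, one_mul]
          linarith [h0 x]
        linarith [hFTC ▸ hint4]
      have hexpneg : Real.exp (-(θ * t)) ≤ E := by
        rw [hE]
        apply Real.exp_le_exp.2
        have h1 : -θ ≤ D + C₀ := by
          rw [hθ]; have := (abs_le.1 (hc x)).1; linarith [G.deg_nonneg x]
        nlinarith [ht.1, ht.2, h0t]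
      have hht : -(h t x) = Real.exp (-(θ * t)) * u t := by
        rw [hu]
        rw [← mul_assoc, ← Real.exp_add]
        simp
      rw [hht]
      have hEDΨ : 0 ≤ E * D * (Ψ t).toReal :=
        mul_nonneg (mul_nonneg (by linarith) hD0) ENNReal.toReal_nonneg
      calc Real.exp (-(θ * t)) * u t ≤ Real.exp (-(θ * t)) * (E * D * (Ψ t).toReal) := by
            apply mul_le_mul_of_nonneg_left hut (Real.exp_pos _).le
        _ ≤ E * (E * D * (Ψ t).toReal) := mul_le_mul_of_nonneg_right hexpneg hEDΨ
        _ = Λ * (Ψ t).toReal := by rw [hΛ]; ring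
  -- the iteration
  have iter : ∀ n : ℕ, ∀ t ∈ Set.Icc (0:ℝ) T', φ t ≤ M * (Λ * t) ^ n / n.factorial := by
    intro n
    induction n with
    | zero => intro t ht; simpa using hφle t ht
    | succ n ih =>
      intro t ht
      have hΨb : Ψ t ≤ ENNReal.ofReal (M * Λ ^ n / n.factorial * (t ^ (n + 1) / (n + 1))) := by
        have hmono : Ψ t ≤ ∫⁻ s in Set.Ioc (0:ℝ) t,
            ENNReal.ofReal (M * Λ ^ n / n.factorial * s ^ n) := by
          show (∫⁻ s in Set.Ioc (0:ℝ) t, ENNReal.ofReal (φ s)) ≤ _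
          rw [← lintegral_indicator measurableSet_Ioc, ← lintegral_indicator measurableSet_Ioc]
          apply lintegral_mono
          intro s
          rcases Classical.em (s ∈ Set.Ioc (0:ℝ) t) with hsm | hsm
          · rw [Set.indicator_of_mem hsm, Set.indicator_of_mem hsm]
            apply ENNReal.ofReal_le_ofReal
            have := ih s ⟨hsm.1.le, hsm.2.trans ht.2⟩
            calc φ s ≤ M * (Λ * s) ^ n / n.factorial := this
              _ = M * Λ ^ n / n.factorial * s ^ n := by rw [mul_pow]; ring
          · rw [Set.indicator_of_notMem hsm, Set.indicator_of_notMem hsm]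
        have heq : (∫⁻ s in Set.Ioc (0:ℝ) t, ENNReal.ofReal (M * Λ ^ n / n.factorial * s ^ n)) =
            ENNReal.ofReal (M * Λ ^ n / n.factorial * (t ^ (n + 1) / (n + 1))) := by
          rw [← ofReal_integral_eq_lintegral_ofReal]
          · congr 1
            rw [← integral_of_le ht.1]
            rw [intervalIntegral.integral_const_mul, integral_pow]
            simp
          · exact (continuous_const.mul (continuous_pow n)).integrableOn_Ioc
          · apply ae_restrict_of_forall_mem measurableSet_Ioc
            intro s hs
            have : (0:ℝ) ≤ s := hs.1.le
            positivity
        exact hmono.trans_eq heq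
      have h1 := key t ht
      have h2 : (Ψ t).toReal ≤ M * Λ ^ n / n.factorial * (t ^ (n + 1) / (n + 1)) := by
        have := ENNReal.toReal_mono ENNReal.ofReal_ne_top hΨb
        have hnn : (0:ℝ) ≤ M * Λ ^ n / n.factorial * (t ^ (n + 1) / (n + 1)) := by
          have h1 : (0:ℝ) ≤ t ^ (n + 1) := pow_nonneg ht.1 _
          have h2 : (0:ℝ) ≤ M * Λ ^ n / n.factorial := by positivity
          exact mul_nonneg h2 (div_nonneg h1 (by positivity))
        rwa [ENNReal.toReal_ofReal hnn] at this
      calc φ t ≤ Λ * (Ψ t).toReal := h1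
        _ ≤ Λ * (M * Λ ^ n / n.factorial * (t ^ (n + 1) / (n + 1))) :=
            mul_le_mul_of_nonneg_left h2 hΛ0
        _ = M * (Λ * t) ^ (n + 1) / (n + 1).factorial := by
            rw [Nat.factorial_succ, mul_pow]
            push_cast
            field_simp
            ring
  -- pass to the limit
  intro t ht x
  have hφt : φ t ≤ 0 := by
    have htend : Filter.Tendsto (fun n : ℕ => M * (Λ * t) ^ n / n.factorial)
        Filter.atTop (nhds 0) := by
      have h1 := FloorSemiring.tendsto_pow_div_factorial_atTop (Λ * t)
      have h2 := h1.const_mul M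
      simpa [mul_div_assoc] using h2
    exact ge_of_tendsto' htend fun n => iter n t ht
  have := hvφ t ht x
  linarith

end WGraph

namespace WGraph

variable {V : Type*} (G : WGraph V)

lemma lap_comb (a b : ℝ) (F H : V → ℝ) (x : V) :
    G.lap (fun y => a + b * F y - H y) x = b * G.lap F x - G.lap H x := by
  rw [lap_eq_sum, lap_eq_sum, lap_eq_sum, Finset.mul_sum, ← Finset.sum_sub_distrib]
  congr 1; ext y; ring

lemma lap_comb' (b : ℝ) (F H : V → ℝ) (x : V) :
    G.lap (fun y => b * F y - H y) x = b * G.lap F x - G.lap H x := by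
  rw [lap_eq_sum, lap_eq_sum, lap_eq_sum, Finset.mul_sum, ← Finset.sum_sub_distrib]
  congr 1; ext y; ring

end WGraph

open WGraph in
theorem kato_semigroup_bound {V : Type*} [Nonempty V] (G : WGraph V)
    (hD : BddAbove (Set.range G.deg))
    (K T α : ℝ) (hK : 0 < K) (hT : 0 < T) (hα0 : 0 ≤ α) (hα1 : α < 1)
    (ρ : V → ℝ) (hρ : Bdd ρ)
    (P PW Pρ : ℝ → (V → ℝ) → V → ℝ)
    (hP : G.IsSemigroup 0 P)
    (hPW : G.IsSemigroup (fun x => -(max (K - ρ x) 0)) PW)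
    (hPρ : G.IsSemigroup ρ Pρ)
    (hkato : (∫⁻ t in Set.Ioc (0:ℝ) T,
        ENNReal.ofReal (⨆ x, P t (fun y => max (K - ρ y) 0) x)) ≤ ENNReal.ofReal α) :
    (∀ t ∈ Set.Ioc (0:ℝ) T, ∀ f : V → ℝ, (∀ x, |f x| ≤ 1) →
      ∀ x, |PW t f x| ≤ (1 - α)⁻¹) ∧
    (α ≤ (1 / 2) * (1 - Real.exp (-(K * T / 4))) →
      (1 - α)⁻¹ ≤ Real.exp (K * T / 2) ∧
      (∀ t ∈ Set.Ioc (0:ℝ) T, ∀ f : V → ℝ, (∀ x, |f x| ≤ 1) →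
        ∀ x, |Pρ t f x| ≤ Real.exp (-(K * t)) * Real.exp (K * T / 2)) ∧
      (∀ t, 0 < t → ∀ f : V → ℝ, (∀ x, |f x| ≤ 1) →
        ∀ x, |Pρ t f x| ≤ Real.exp (K * (T - t) / 2))) := by
  classical
  obtain ⟨x₀⟩ := (inferInstance : Nonempty V)
  obtain ⟨D, hDub⟩ := hD
  have hDd : ∀ x, G.deg x ≤ D := fun x => hDub (Set.mem_range_self x)
  have hD0 : 0 ≤ D := (G.deg_nonneg x₀).trans (hDd x₀)
  obtain ⟨Cρ, hCρ⟩ := hρ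
  have hCρ0 : 0 ≤ Cρ := (abs_nonneg _).trans (hCρ x₀)
  set W' : V → ℝ := fun y => max (K - ρ y) 0 with hW'
  have hW'nonneg : ∀ y, 0 ≤ W' y := fun y => le_max_right _ _
  set CW : ℝ := |K| + Cρ with hCW
  have hCW0 : 0 ≤ CW := add_nonneg (abs_nonneg _) hCρ0
  have hW'bd : ∀ y, |W' y| ≤ CW := by
    intro y
    rw [abs_of_nonneg (hW'nonneg y)]
    have h1 := (abs_le.1 (hCρ y)).1
    have h2 : K - ρ y ≤ |K| + Cρ := by
      have := le_abs_self K; linarith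
    exact max_le h2 hCW0
  have hW'Bdd : Bdd W' := ⟨CW, hW'bd⟩
  have hPWpot : ∀ x, |(fun x => -(max (K - ρ x) 0)) x| ≤ CW := by
    intro x; rw [abs_neg]; exact hW'bd x
  have hP0pot : ∀ x, |(0 : V → ℝ) x| ≤ 0 := by intro x; simp
  -- uniform bounds on [0, T]
  obtain ⟨BP, hBP1, hBP⟩ := G.sg_unifBound hP D 0 T hDd hP0pot hT.le
  obtain ⟨BPW, hBPW1, hBPW⟩ := G.sg_unifBound hPW D CW T hDd hPWpot hT.le
  obtain ⟨BPρ, hBPρ1, hBPρ⟩ := G.sg_unifBound hPρ D Cρ T hDd hCρ hT.le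
  -- the primitive of `P s W'`
  set z : V → ℝ → ℝ := fun x t => ∫ s in (0:ℝ)..t, P s W' x with hz
  have hPW'cont : ∀ x, ContinuousOn (fun s => P s W' x) (Set.Ici 0) :=
    hP.2.2.2.2.2.1 W' hW'Bdd
  have hPW'int : ∀ x, ∀ t : ℝ, 0 ≤ t → IntervalIntegrable (fun s => P s W' x) MeasureTheory.volume 0 t := by
    intro x t ht
    apply ContinuousOn.intervalIntegrable
    rw [Set.uIcc_of_le ht]
    exact (hPW'cont x).mono (fun s hs => hs.1)
  have hPW'pos : ∀ x, ∀ s : ℝ, 0 ≤ s → 0 ≤ P s W' x := by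
    intro x s hs
    exact hP.2.2.2.2.2.2.2 W' hW'Bdd hW'nonneg s hs x
  have hzderiv : ∀ x, ∀ t : ℝ, 0 < t → HasDerivAt (z x) (P t W' x) t := by
    intro x t ht
    have hmeas := ContinuousOn.stronglyMeasurableAtFilter (μ := MeasureTheory.volume)
      isOpen_Ioi ((hPW'cont x).mono (fun s (hs : s ∈ Set.Ioi 0) => le_of_lt hs)) t ht
    have hca : ContinuousAt (fun s => P s W' x) t :=
      (hPW'cont x).continuousAt
        (Ici_mem_nhds ht)
    exact intervalIntegral.integral_hasDerivAt_right (hPW'int x t ht.le) hmeas hca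
  have hzcont : ∀ x, ContinuousOn (z x) (Set.Ici 0) := by
    intro x t ht
    have ht0 : (0:ℝ) ≤ t := ht
    have hI : Set.uIcc (0:ℝ) (t + 1) = Set.Icc 0 (t + 1) := Set.uIcc_of_le (by linarith)
    have hint : MeasureTheory.IntegrableOn (fun s => P s W' x)
        (Set.uIcc 0 (t + 1)) MeasureTheory.volume := by
      rw [hI]
      exact ContinuousOn.integrableOn_Icc ((hPW'cont x).mono (fun s hs => hs.1))
    have hcont' := intervalIntegral.continuousOn_primitive_interval hint
    rw [hI] at hcont'
    have h1 : ContinuousWithinAt (z x) (Set.Icc 0 (t + 1)) t :=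
      hcont' t ⟨ht0, by linarith⟩
    apply h1.mono_of_mem_nhdsWithin
    have h2 : Set.Iic (t + 1) ∈ nhdsWithin t (Set.Ici (0:ℝ)) :=
      mem_nhdsWithin_of_mem_nhds (Iic_mem_nhds (by linarith))
    have h3 : Set.Ici (0:ℝ) ∈ nhdsWithin t (Set.Ici (0:ℝ)) := self_mem_nhdsWithin
    have h4 := Filter.inter_mem h3 h2
    rwa [Set.Ici_inter_Iic] at h4
  have hzlap : ∀ t : ℝ, 0 < t → ∀ x, G.lap (fun y => z y t) x = P t W' x - W' x := by
    intro t ht x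
    have hstep1 : G.lap (fun y => z y t) x
        = ∑ y ∈ (G.locFin x).toFinset, ∫ s in (0:ℝ)..t, G.q x y * (P s W' y - P s W' x) := by
      rw [G.lap_eq_sum]
      apply Finset.sum_congr rfl
      intro y _
      rw [← intervalIntegral.integral_sub (hPW'int y t ht.le) (hPW'int x t ht.le),
        ← intervalIntegral.integral_const_mul]
    have hstep2 : ∑ y ∈ (G.locFin x).toFinset,
          (∫ s in (0:ℝ)..t, G.q x y * (P s W' y - P s W' x))
        = ∫ s in (0:ℝ)..t, ∑ y ∈ (G.locFin x).toFinset, G.q x y * (P s W' y - P s W' x) := by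
      rw [intervalIntegral.integral_finset_sum]
      intro y _
      exact ((hPW'int y t ht.le).sub (hPW'int x t ht.le)).const_mul _
    have hstep3 : (∫ s in (0:ℝ)..t, ∑ y ∈ (G.locFin x).toFinset,
          G.q x y * (P s W' y - P s W' x))
        = ∫ s in (0:ℝ)..t, G.lap (P s W') x := by
      apply intervalIntegral.integral_congr
      intro s _
      exact (G.lap_eq_sum (P s W') x).symm
    have hstep4 : (∫ s in (0:ℝ)..t, G.lap (P s W') x) = P t W' x - P 0 W' x := by
      apply intervalIntegral.integral_eq_sub_of_hasDeriv_right_of_le ht.le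
        ((hPW'cont x).mono (fun s hs => hs.1))
      · intro s hs
        have hd := hP.2.2.2.2.2.2.1 W' hW'Bdd x s hs.1
        have hd' : HasDerivAt (fun s => P s W' x) (G.lap (P s W') x) s := by
          simpa using hd
        exact hd'.hasDerivWithinAt
      · apply ContinuousOn.intervalIntegrable
        rw [Set.uIcc_of_le ht.le]
        exact G.lap_continuousOn (fun s => P s W') x _
          (fun y => (hPW'cont y).mono (fun s hs => hs.1))
    rw [hstep1, hstep2, hstep3, hstep4, hP.1]
  have hzbd : ∀ t ∈ Set.Icc (0:ℝ) T, ∀ x, |z x t| ≤ CW * BP * T := by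
    intro t ht x
    have hBP0 : (0:ℝ) ≤ BP := by linarith
    have h1 : ∀ s ∈ Set.uIoc (0:ℝ) t, ‖P s W' x‖ ≤ CW * BP := by
      intro s hs
      rw [Set.uIoc_of_le ht.1] at hs
      rw [Real.norm_eq_abs]
      exact hBP s ⟨hs.1.le, hs.2.trans ht.2⟩ W' CW hCW0 hW'bd x
    have h2 := intervalIntegral.norm_integral_le_of_norm_le_const h1
    rw [sub_zero, Real.norm_eq_abs, abs_of_nonneg ht.1] at h2
    calc |z x t| ≤ CW * BP * t := h2
      _ ≤ CW * BP * T := mul_le_mul_of_nonneg_left ht.2 (mul_nonneg hCW0 hBP0)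
  have hzα : ∀ t ∈ Set.Icc (0:ℝ) T, ∀ x, z x t ≤ α := by
    intro t ht x
    have hint : MeasureTheory.IntegrableOn (fun s => P s W' x)
        (Set.Ioc 0 t) MeasureTheory.volume :=
      (ContinuousOn.integrableOn_Icc ((hPW'cont x).mono (fun s hs => hs.1))).mono_set
        Set.Ioc_subset_Icc_self
    have heq : z x t = ∫ s in Set.Ioc (0:ℝ) t, P s W' x :=
      intervalIntegral.integral_of_le ht.1
    have hofReal : ENNReal.ofReal (z x t)
        = ∫⁻ s in Set.Ioc (0:ℝ) t, ENNReal.ofReal (P s W' x) := by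
      rw [heq]
      exact MeasureTheory.ofReal_integral_eq_lintegral_ofReal hint
        (MeasureTheory.ae_restrict_of_forall_mem measurableSet_Ioc
          (fun s hs => hPW'pos x s hs.1.le))
    have hmono : (∫⁻ s in Set.Ioc (0:ℝ) t, ENNReal.ofReal (P s W' x))
        ≤ ∫⁻ s in Set.Ioc (0:ℝ) t, ENNReal.ofReal (⨆ x', P s W' x') := by
      rw [← MeasureTheory.lintegral_indicator measurableSet_Ioc,
          ← MeasureTheory.lintegral_indicator measurableSet_Ioc]
      apply MeasureTheory.lintegral_mono
      intro s
      rcases Classical.em (s ∈ Set.Ioc (0:ℝ) t) with hsm | hsm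
      · rw [Set.indicator_of_mem hsm, Set.indicator_of_mem hsm]
        apply ENNReal.ofReal_le_ofReal
        obtain ⟨C, hC⟩ := hP.2.2.2.2.1 W' hW'Bdd s hsm.1.le
        exact le_ciSup ⟨C, by rintro b ⟨x', rfl⟩; exact (abs_le.1 (hC x')).2⟩ x
      · rw [Set.indicator_of_notMem hsm, Set.indicator_of_notMem hsm]
    have hsub : (∫⁻ s in Set.Ioc (0:ℝ) t, ENNReal.ofReal (⨆ x', P s W' x'))
        ≤ ∫⁻ s in Set.Ioc (0:ℝ) T, ENNReal.ofReal (⨆ x', P s W' x') :=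
      MeasureTheory.lintegral_mono_set (Set.Ioc_subset_Ioc_right ht.2)
    have hfinal : ENNReal.ofReal (z x t) ≤ ENNReal.ofReal α := by
      rw [hofReal]
      exact (hmono.trans hsub).trans hkato
    exact (ENNReal.ofReal_le_ofReal_iff hα0).1 hfinal
  -- Part 1 (on the closed interval)
  have partone : ∀ t ∈ Set.Icc (0:ℝ) T, ∀ f : V → ℝ, (∀ x, |f x| ≤ 1) →
      ∀ x, |PW t f x| ≤ (1 - α)⁻¹ := by
    intro t ht f hf x
    set S : Set ℝ := {a | ∃ u ∈ Set.Icc (0:ℝ) T, ∃ y, a = |PW u f y|} with hS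
    have hSne : S.Nonempty := ⟨|PW 0 f x₀|, 0, ⟨le_rfl, hT.le⟩, x₀, rfl⟩
    have hSub : ∀ a ∈ S, a ≤ BPW := by
      rintro a ⟨u, hu, y, rfl⟩
      simpa using hBPW u hu f 1 zero_le_one hf y
    set N : ℝ := sSup S with hN
    have hNmem : ∀ u ∈ Set.Icc (0:ℝ) T, ∀ y, |PW u f y| ≤ N := by
      intro u hu y
      exact le_csSup ⟨BPW, fun a ha => hSub a ha⟩ ⟨u, hu, y, rfl⟩
    have hN0 : 0 ≤ N := (abs_nonneg _).trans (hNmem 0 ⟨le_rfl, hT.le⟩ x₀)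
    have aux : ∀ g : V → ℝ, (∀ y, |g y| ≤ 1) →
        (∀ u ∈ Set.Icc (0:ℝ) T, ∀ y, PW u g y ≤ N) →
        ∀ u ∈ Set.Icc (0:ℝ) T, ∀ y, PW u g y ≤ 1 + N * α := by
      intro g hg hgN
      have hgBdd : Bdd g := ⟨1, hg⟩
      set h : ℝ → V → ℝ := fun u y => 1 + N * z y u - PW u g y with hh
      set r : ℝ → V → ℝ := fun u y => N * W' y - W' y * PW u g y with hr
      have hMP := G.maxPrinciple D 0 T (1 + N * (CW * BP * T) + BPW) hDd hT.le
        (fun _ => 0) (fun y => by simp) h r ?_ ?_ ?_ ?_ ?_ ?_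
      · intro u hu y
        have hmp := hMP u hu y
        simp only [hh] at hmp
        have hz := hzα u hu y
        nlinarith [mul_le_mul_of_nonneg_left hz hN0]
      · -- continuity of h
        intro y
        exact (continuousOn_const.add (continuousOn_const.mul (hzcont y))).sub
          (hPW.2.2.2.2.2.1 g hgBdd y)
      · -- continuity of r
        intro y
        exact continuousOn_const.sub
          (continuousOn_const.mul (hPW.2.2.2.2.2.1 g hgBdd y))
      · -- the derivative
        intro y u hu
        have hd1 := ((hzderiv y u hu).const_mul N).const_add 1
        have hd2 := hPW.2.2.2.2.2.2.1 g hgBdd y u hu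
        have hd := hd1.sub hd2
        have hlapcomb : G.lap (h u) y
            = N * G.lap (fun y' => z y' u) y - G.lap (PW u g) y :=
          G.lap_comb 1 N _ _ y
        refine hd.congr_deriv ?_
        rw [hlapcomb, hzlap u hu y]
        simp only [hh, hr, hW']
        ring
      · -- nonnegativity of r
        intro u hu y
        simp only [hr]
        nlinarith [mul_nonneg (hW'nonneg y) (sub_nonneg.2 (hgN u hu y))]
      · -- the uniform bound
        intro u hu y
        have h1 := hzbd u hu y
        have h2 : |PW u g y| ≤ 1 * BPW := hBPW u hu g 1 zero_le_one hg y
        rw [one_mul] at h2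
        simp only [hh]
        have h3 : |1 + N * z y u - PW u g y| ≤ |1 + N * z y u| + |PW u g y| :=
          abs_sub _ _
        have h4 : |1 + N * z y u| ≤ 1 + N * (CW * BP * T) := by
          calc |1 + N * z y u| ≤ |(1:ℝ)| + |N * z y u| := abs_add_le _ _
            _ = 1 + N * |z y u| := by rw [abs_one, abs_mul, abs_of_nonneg hN0]
            _ ≤ 1 + N * (CW * BP * T) := by
                nlinarith [mul_le_mul_of_nonneg_left h1 hN0]
        linarith
      · -- the initial condition
        intro y
        simp only [hh]
        have hz0 : z y 0 = 0 := intervalIntegral.integral_same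
        rw [hz0, hPW.1, mul_zero, add_zero]
        linarith [(abs_le.1 (hg y)).2]
    have hboth : ∀ u ∈ Set.Icc (0:ℝ) T, ∀ y, |PW u f y| ≤ 1 + N * α := by
      intro u hu y
      have hub := aux f hf (fun u hu y => (abs_le.1 (hNmem u hu y)).2) u hu y
      have hnegf : ∀ y, |(fun y' => -(f y')) y| ≤ 1 := fun y => by simpa using hf y
      have hlb := aux (fun y' => -(f y')) hnegf
        (fun u hu y => by
          rw [G.sg_neg hPW]
          linarith [(abs_le.1 (hNmem u hu y)).1]) u hu y
      rw [G.sg_neg hPW] at hlb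
      exact abs_le.2 ⟨by linarith, hub⟩
    have hNle : N ≤ 1 + N * α :=
      csSup_le hSne (by rintro a ⟨u, hu, y, rfl⟩; exact hboth u hu y)
    have hNfin : N ≤ (1 - α)⁻¹ := by
      rw [inv_eq_one_div, le_div_iff₀ (by linarith : (0:ℝ) < 1 - α)]
      nlinarith
    exact (hNmem t ht x).trans hNfin
  -- domination of `Pρ` by `PW`
  have parttwo : ∀ t ∈ Set.Icc (0:ℝ) T, ∀ f : V → ℝ, (∀ x, |f x| ≤ 1) →
      ∀ x, |Pρ t f x| ≤ Real.exp (-(K * t)) * (1 - α)⁻¹ := by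
    have honeB : ∀ y : V, |(fun _ : V => (1:ℝ)) y| ≤ 1 := fun y => by simp
    have hPW1 : ∀ u ∈ Set.Icc (0:ℝ) T, ∀ y, PW u (fun _ => (1:ℝ)) y ≤ (1 - α)⁻¹ :=
      fun u hu y => (le_abs_self _).trans (partone u hu _ honeB y)
    have hexpc : Continuous (fun s : ℝ => Real.exp (-(K * s))) :=
      ((continuous_const.mul continuous_id).neg).rexp
    have aux : ∀ g : V → ℝ, (∀ y, |g y| ≤ 1) → ∀ u ∈ Set.Icc (0:ℝ) T, ∀ y,
        Pρ u g y ≤ Real.exp (-(K * u)) * PW u (fun _ => (1:ℝ)) y := by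
      intro g hg
      have hgBdd : Bdd g := ⟨1, hg⟩
      set h : ℝ → V → ℝ :=
        fun u y => Real.exp (-(K * u)) * PW u (fun _ => (1:ℝ)) y - Pρ u g y with hh
      set r : ℝ → V → ℝ :=
        fun u y => (W' y - K + ρ y) * (Real.exp (-(K * u)) * PW u (fun _ => (1:ℝ)) y) with hr
      have hMP := G.maxPrinciple D Cρ T (BPW + BPρ) hDd hT.le ρ hCρ h r ?_ ?_ ?_ ?_ ?_ ?_
      · intro u hu y
        have hmp := hMP u hu y
        simp only [hh] at hmp
        linarith
      · -- continuity of h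
        intro y
        exact ((hexpc.continuousOn).mul (hPW.2.2.2.2.2.1 _ (bdd_const 1) y)).sub
          (hPρ.2.2.2.2.2.1 g hgBdd y)
      · -- continuity of r
        intro y
        exact continuousOn_const.mul
          ((hexpc.continuousOn).mul (hPW.2.2.2.2.2.1 _ (bdd_const 1) y))
      · -- the derivative
        intro y u hu
        have hdexp : HasDerivAt (fun s : ℝ => Real.exp (-(K * s)))
            (Real.exp (-(K * u)) * (-K)) u := by
          have h1 : HasDerivAt (fun s : ℝ => -(K * s)) (-K) u := by
            simpa [neg_mul] using (hasDerivAt_id u).const_mul (-K)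
          exact h1.exp
        have hdPW := hPW.2.2.2.2.2.2.1 (fun _ => (1:ℝ)) (bdd_const 1) y u hu
        have hdPρ := hPρ.2.2.2.2.2.2.1 g hgBdd y u hu
        have hd := (hdexp.mul hdPW).sub hdPρ
        have hlapcomb : G.lap (h u) y
            = Real.exp (-(K * u)) * G.lap (PW u (fun _ => (1:ℝ))) y - G.lap (Pρ u g) y :=
          G.lap_comb' _ _ _ y
        refine hd.congr_deriv ?_
        rw [hlapcomb]
        simp only [hh, hr, hW']
        ring
      · -- nonnegativity of r
        intro u hu y
        simp only [hr]
        have h1 : 0 ≤ W' y - K + ρ y := by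
          have := le_max_left (K - ρ y) 0
          simp only [hW']
          linarith
        have h2 : 0 ≤ Real.exp (-(K * u)) * PW u (fun _ => (1:ℝ)) y :=
          mul_nonneg (Real.exp_pos _).le (G.sg_one_nonneg hPW hu.1 y)
        exact mul_nonneg h1 h2
      · -- the uniform bound
        intro u hu y
        simp only [hh]
        have h1 : |PW u (fun _ => (1:ℝ)) y| ≤ 1 * BPW :=
          hBPW u hu _ 1 zero_le_one honeB y
        have h2 : |Pρ u g y| ≤ 1 * BPρ := hBPρ u hu g 1 zero_le_one hg y
        rw [one_mul] at h1 h2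
        have he1 : Real.exp (-(K * u)) ≤ 1 := by
          rw [Real.exp_le_one_iff]
          nlinarith [hu.1]
        have he0 : (0:ℝ) ≤ Real.exp (-(K * u)) := (Real.exp_pos _).le
        have h3 : |Real.exp (-(K * u)) * PW u (fun _ => (1:ℝ)) y| ≤ BPW := by
          rw [abs_mul, abs_of_nonneg he0]
          calc Real.exp (-(K * u)) * |PW u (fun _ => (1:ℝ)) y|
              ≤ 1 * |PW u (fun _ => (1:ℝ)) y| :=
                mul_le_mul_of_nonneg_right he1 (abs_nonneg _)
            _ ≤ BPW := by rw [one_mul]; exact h1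
        calc |Real.exp (-(K * u)) * PW u (fun _ => (1:ℝ)) y - Pρ u g y|
            ≤ |Real.exp (-(K * u)) * PW u (fun _ => (1:ℝ)) y| + |Pρ u g y| := abs_sub _ _
          _ ≤ BPW + BPρ := add_le_add h3 h2
      · -- the initial condition
        intro y
        simp only [hh]
        rw [hPW.1, hPρ.1, mul_zero, neg_zero, Real.exp_zero, one_mul]
        linarith [(abs_le.1 (hg y)).2]
    intro t ht f hf x
    have hub := aux f hf t ht x
    have hlb := aux (fun y => -(f y)) (fun y => by simpa using hf y) t ht x
    rw [G.sg_neg hPρ] at hlb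
    have hPW1b := hPW1 t ht x
    have he : (0:ℝ) ≤ Real.exp (-(K * t)) := (Real.exp_pos _).le
    have h1 : Pρ t f x ≤ Real.exp (-(K * t)) * (1 - α)⁻¹ :=
      hub.trans (mul_le_mul_of_nonneg_left hPW1b he)
    have h2 : -(Pρ t f x) ≤ Real.exp (-(K * t)) * (1 - α)⁻¹ :=
      hlb.trans (mul_le_mul_of_nonneg_left hPW1b he)
    exact abs_le.2 ⟨by linarith, h1⟩
  refine ⟨fun t ht f hf x => partone t (Set.Ioc_subset_Icc_self ht) f hf x, fun hα2 => ?_⟩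
  have h2a : (1 - α)⁻¹ ≤ Real.exp (K * T / 2) := by
    have hx : 0 < K * T / 4 := by positivity
    have h1 : Real.exp (-(K * T / 2)) ≤ Real.exp (-(K * T / 4)) := by
      apply Real.exp_le_exp.2; linarith
    have h2 : Real.exp (-(K * T / 4)) ≤ 1 - α := by linarith
    have h3 : Real.exp (-(K * T / 2)) ≤ 1 - α := h1.trans h2
    have h4 : 0 < Real.exp (-(K * T / 2)) := Real.exp_pos _
    have h5 : (1 - α)⁻¹ ≤ (Real.exp (-(K * T / 2)))⁻¹ := by
      apply inv_anti₀ h4 h3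
    rwa [← Real.exp_neg, neg_neg] at h5
  have h2b : ∀ t ∈ Set.Ioc (0:ℝ) T, ∀ f : V → ℝ, (∀ x, |f x| ≤ 1) →
      ∀ x, |Pρ t f x| ≤ Real.exp (-(K * t)) * Real.exp (K * T / 2) := by
    intro t ht f hf x
    calc |Pρ t f x| ≤ Real.exp (-(K * t)) * (1 - α)⁻¹ :=
          parttwo t (Set.Ioc_subset_Icc_self ht) f hf x
      _ ≤ Real.exp (-(K * t)) * Real.exp (K * T / 2) :=
          mul_le_mul_of_nonneg_left h2a (Real.exp_pos _).le
  refine ⟨h2a, h2b, ?_⟩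
  -- the scaled bound
  have pscaled : ∀ t ∈ Set.Icc (0:ℝ) T, ∀ M : ℝ, 0 ≤ M → ∀ g : V → ℝ,
      (∀ x, |g x| ≤ M) → ∀ x, |Pρ t g x| ≤ M * (Real.exp (-(K * t)) * (1 - α)⁻¹) := by
    intro t ht M hM g hg x
    rcases eq_or_lt_of_le hM with hM0 | hM0
    · have hg0 : g = (0:ℝ) • g := by
        funext y
        have := hg y
        rw [← hM0] at this
        have : g y = 0 := abs_eq_zero.1 (le_antisymm this (abs_nonneg _))
        simp [this]
      rw [hg0, hPρ.2.2.2.1]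
      simp [← hM0]
    · have hgM : g = M • (M⁻¹ • g) := by
        funext y
        rw [Pi.smul_apply, Pi.smul_apply, smul_eq_mul, smul_eq_mul, ← mul_assoc,
          mul_inv_cancel₀ hM0.ne', one_mul]
      have hgs : ∀ y, |(M⁻¹ • g) y| ≤ 1 := by
        intro y
        rw [Pi.smul_apply, smul_eq_mul, abs_mul, abs_of_nonneg (inv_nonneg.2 hM)]
        rw [← mul_inv_cancel₀ (ne_of_gt hM0), mul_comm]
        exact mul_le_mul_of_nonneg_right (hg y) (inv_nonneg.2 hM)
      have hb := parttwo t ht (M⁻¹ • g) hgs x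
      have hPg : Pρ t g = M • Pρ t (M⁻¹ • g) := by
        conv_lhs => rw [hgM]
        exact hPρ.2.2.2.1 t M (M⁻¹ • g)
      rw [hPg, Pi.smul_apply, smul_eq_mul, abs_mul, abs_of_nonneg hM]
      exact mul_le_mul_of_nonneg_left hb hM
  -- iterate the semigroup property
  have main : ∀ n : ℕ, ∀ t : ℝ, 0 < t → t ≤ (n + 1) * T → ∀ f : V → ℝ,
      (∀ x, |f x| ≤ 1) → ∀ x, |Pρ t f x| ≤ Real.exp (K * (T - t) / 2) := by
    intro n
    induction n with
    | zero =>
      intro t h0t htT f hf x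
      have htT2 : t ≤ T := by push_cast at htT; linarith
      have h1 := parttwo t ⟨h0t.le, htT2⟩ f hf x
      have h2 : Real.exp (-(K * t)) * (1 - α)⁻¹ ≤ Real.exp (K * (T - t) / 2) := by
        calc Real.exp (-(K * t)) * (1 - α)⁻¹ ≤ Real.exp (-(K * t)) * Real.exp (K * T / 2) :=
              mul_le_mul_of_nonneg_left h2a (Real.exp_pos _).le
          _ = Real.exp (-(K * t) + K * T / 2) := (Real.exp_add _ _).symm
          _ ≤ Real.exp (K * (T - t) / 2) := by
              apply Real.exp_le_exp.2; nlinarith [h0t.le]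
      exact h1.trans h2
    | succ n ih =>
      intro t h0t htT f hf x
      rcases le_or_gt t ((n + 1) * T) with hle | hgt
      · exact ih t h0t hle f hf x
      · have htT' : 0 < t - T := by nlinarith [hT]
        have htT'' : t - T ≤ (n + 1) * T := by push_cast at htT ⊢; linarith
        set M' := Real.exp (K * (T - (t - T)) / 2) with hM'
        have hg' : ∀ y, |Pρ (t - T) f y| ≤ M' := fun y => ih (t - T) htT' htT'' f hf y
        have hsplit : Pρ t f = Pρ T (Pρ (t - T) f) := by
          have h1 := hPρ.2.1 T (t - T) hT.le htT'.le f
          rw [show T + (t - T) = t by ring] at h1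
          exact h1
        rw [hsplit]
        have h2 := pscaled T ⟨hT.le, le_rfl⟩ M' (Real.exp_pos _).le (Pρ (t - T) f) hg' x
        calc |Pρ T (Pρ (t - T) f) x| ≤ M' * (Real.exp (-(K * T)) * (1 - α)⁻¹) := h2
          _ ≤ M' * (Real.exp (-(K * T)) * Real.exp (K * T / 2)) := by
              apply mul_le_mul_of_nonneg_left _ (Real.exp_pos _).le
              exact mul_le_mul_of_nonneg_left h2a (Real.exp_pos _).le
          _ = Real.exp (K * (T - t) / 2) := by
              rw [hM', ← Real.exp_add, ← Real.exp_add]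
              congr 1; ring
  intro t h0t f hf x
  obtain ⟨n, hn⟩ := exists_nat_ge (t / T)
  have : t ≤ (n + 1) * T := by
    have h1 : t / T ≤ n := hn
    have h2 : t ≤ n * T := by
      rw [div_le_iff₀ hT] at h1; linarith
    nlinarith [hT]
  exact main n t h0t this f hf x
end
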